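/- Let $A$ be a local ring with $1/2 \in A$. Then the formal tangent space $TK_2^M(A) = \ker\{K_2^M(A[\varepsilon]/\varepsilon^2) \to K_2^M(A)\}$ is generated as an abelian group by symbols of the form $\{1 + c\varepsilon, a\}$ with $c \in A$, $a \in A^*$. -/

import Mathlib

open FreeAbelianGroup

/-- Generating relations for the Milnor `K₂` of a commutative ring:
bilinearity in both slots and the Steinberg relation. -/
def K2Rel (R : Type) [CommRing R] : AddSubgroup (FreeAbelianGroup (Rˣ × Rˣ)) :=
  AddSubgroup.closure
    ({ x | ∃ u v w : Rˣ, x = of (u * v, w) - of (u, w) - of (v, w) } ∪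
     { x | ∃ u v w : Rˣ, x = of (u, v * w) - of (u, v) - of (u, w) } ∪
     { x | ∃ u v : Rˣ, (u : R) + (v : R) = 1 ∧ x = of (u, v) })

/-- The Milnor `K`-group `K₂ᴹ(R)`: symbols `{u,v}` of pairs of units, bilinear,
subject to the Steinberg relation `{u, 1-u} = 0`. -/
def K2M (R : Type) [CommRing R] := FreeAbelianGroup (Rˣ × Rˣ) ⧸ K2Rel R

instance (R : Type) [CommRing R] : AddCommGroup (K2M R) :=
  QuotientAddGroup.Quotient.addCommGroup _

/-- The Milnor symbol `{u, v} ∈ K₂ᴹ(R)`. -/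
def K2M.symbol {R : Type} [CommRing R] (u v : Rˣ) : K2M R :=
  QuotientAddGroup.mk (of (u, v))

/-- Functoriality of `K₂ᴹ` along ring homomorphisms. -/
def K2M.map {R S : Type} [CommRing R] [CommRing S] (f : R →+* S) : K2M R →+ K2M S :=
  QuotientAddGroup.map _ _
    (FreeAbelianGroup.map (fun p => (Units.map (f : R →* S) p.1, Units.map (f : R →* S) p.2)))
    (by
      rw [← AddSubgroup.map_le_iff_le_comap, K2Rel,
        AddMonoidHom.map_closure]
      refine AddSubgroup.closure_le _ |>.2 ?_
      rintro _ ⟨x, hx, rfl⟩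
      refine AddSubgroup.subset_closure ?_
      rcases hx with ((⟨u, v, w, rfl⟩ | ⟨u, v, w, rfl⟩) | ⟨u, v, h, rfl⟩)
      · refine Or.inl (Or.inl ⟨Units.map f u, Units.map f v, Units.map f w, ?_⟩)
        simp [map_sub, map_of_apply, map_mul]
      · refine Or.inl (Or.inr ⟨Units.map f u, Units.map f v, Units.map f w, ?_⟩)
        simp [map_sub, map_of_apply, map_mul]
      · refine Or.inr ⟨Units.map f u, Units.map f v, ?_, ?_⟩
        · simpa using congrArg f h
        · simp [map_of_apply])

/-- The projection `A[ε]/ε² → A`, `ε ↦ 0`, as a ring homomorphism. -/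
def dualNumberProj (A : Type) [CommRing A] : DualNumber A →+* A :=
  (TrivSqZeroExt.fstHom ℤ A A).toRingHom

/-! ### Auxiliary material for the proof -/

namespace K2Aux

open TrivSqZeroExt DualNumber

section Generic

variable {R : Type} [CommRing R]

theorem symbol_rel {x : FreeAbelianGroup (Rˣ × Rˣ)} (h : x ∈ K2Rel R) :
    (QuotientAddGroup.mk x : K2M R) = 0 :=
  (QuotientAddGroup.eq_zero_iff x).2 h

theorem symbol_mul_left (u v w : Rˣ) :
    K2M.symbol (u * v) w = K2M.symbol u w + K2M.symbol v w := by
  have h : (QuotientAddGroup.mk (of (u * v, w) - of (u, w) - of (v, w)) : K2M R) = 0 :=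
    symbol_rel (AddSubgroup.subset_closure (Or.inl (Or.inl ⟨u, v, w, rfl⟩)))
  rw [QuotientAddGroup.mk_sub, QuotientAddGroup.mk_sub, sub_sub, sub_eq_zero] at h
  exact h

theorem symbol_mul_right (u v w : Rˣ) :
    K2M.symbol u (v * w) = K2M.symbol u v + K2M.symbol u w := by
  have h : (QuotientAddGroup.mk (of (u, v * w) - of (u, v) - of (u, w)) : K2M R) = 0 :=
    symbol_rel (AddSubgroup.subset_closure (Or.inl (Or.inr ⟨u, v, w, rfl⟩)))
  rw [QuotientAddGroup.mk_sub, QuotientAddGroup.mk_sub, sub_sub, sub_eq_zero] at h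
  exact h

theorem symbol_steinberg (u v : Rˣ) (h : (u : R) + (v : R) = 1) :
    K2M.symbol u v = 0 :=
  symbol_rel (AddSubgroup.subset_closure (Or.inr ⟨u, v, h, rfl⟩))

theorem symbol_one_left (w : Rˣ) : K2M.symbol (1 : Rˣ) w = 0 := by
  have h := symbol_mul_left (1 : Rˣ) 1 w
  rw [one_mul] at h
  exact (left_eq_add.mp h)

variable {S : Type} [CommRing S]

theorem map_symbol (f : R →+* S) (u v : Rˣ) :
    K2M.map f (K2M.symbol u v) =
      K2M.symbol (Units.map (f : R →* S) u) (Units.map (f : R →* S) v) := by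
  show QuotientAddGroup.map _ _ _ _ (QuotientAddGroup.mk _) = _
  rw [QuotientAddGroup.map_mk, FreeAbelianGroup.map_of_apply]
  rfl

end Generic

section Dual

variable {A : Type} [CommRing A]

/-- inclusion `A → A[ε]` as a ring hom. -/
def iA (A : Type) [CommRing A] : A →+* DualNumber A := TrivSqZeroExt.inlHom A A

/-- `oe c = 1 + cε` as a unit. -/
def oe (c : A) : (DualNumber A)ˣ where
  val := 1 + inl c * eps
  inv := 1 - inl c * eps
  val_inv := by
    have h : (eps * eps : DualNumber A) = 0 := eps_mul_eps
    linear_combination (-(inl c * inl c) : DualNumber A) * h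
  inv_val := by
    have h : (eps * eps : DualNumber A) = 0 := eps_mul_eps
    linear_combination (-(inl c * inl c) : DualNumber A) * h

@[simp] theorem oe_val (c : A) : ((oe c : (DualNumber A)ˣ) : DualNumber A) = 1 + inl c * eps := rfl

theorem oe_mul (b d : A) : (oe b) * (oe d) = oe (b + d) := by
  apply Units.ext
  show (1 + inl b * eps) * (1 + inl d * eps) = 1 + inl (b + d) * eps
  have h : (eps * eps : DualNumber A) = 0 := eps_mul_eps
  rw [inl_add]
  linear_combination (inl b * inl d : DualNumber A) * h

/-- units of `A` as units of `A[ε]`. -/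
def uA (a : Aˣ) : (DualNumber A)ˣ := Units.map (iA A : A →* DualNumber A) a

@[simp] theorem uA_val (a : Aˣ) : ((uA a : (DualNumber A)ˣ) : DualNumber A) = inl (a : A) := rfl

theorem uA_mul (a b : Aˣ) : uA (a * b) = uA a * uA b := by
  simp [uA, map_mul]

theorem uA_oe_val (a : Aˣ) (c : A) :
    ((uA a * oe c : (DualNumber A)ˣ) : DualNumber A) = inl (a : A) + inl ((a : A) * c) * eps := by
  show inl (a : A) * (1 + inl c * eps) = _
  rw [mul_add, mul_one, ← mul_assoc, ← inl_mul]

/-- The subgroup generated by symbols `{1+cε, a}`. -/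
def TT (A : Type) [CommRing A] : AddSubgroup (K2M (DualNumber A)) :=
  AddSubgroup.closure
    { x : K2M (DualNumber A) |
      ∃ (c : A) (a : Aˣ) (u v : (DualNumber A)ˣ),
        (u : DualNumber A) = 1 + TrivSqZeroExt.inl c * DualNumber.eps ∧
        (v : DualNumber A) = TrivSqZeroExt.inl (a : A) ∧
        x = K2M.symbol u v }

theorem mem_TT (c : A) (a : Aˣ) : K2M.symbol (oe c) (uA a) ∈ TT A :=
  AddSubgroup.subset_closure ⟨c, a, oe c, uA a, rfl, rfl, rfl⟩

/-- `F b d = {1+bε, 1+dε}`. -/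
def Fel (b d : A) : K2M (DualNumber A) := K2M.symbol (oe b) (oe d)

/-- `G x d = {x, 1+dε}`. -/
def Gel (x : Aˣ) (d : A) : K2M (DualNumber A) := K2M.symbol (uA x) (oe d)

theorem Fel_add_left (b b' d : A) : Fel (b + b') d = Fel b d + Fel b' d := by
  rw [Fel, Fel, Fel, ← oe_mul, symbol_mul_left]

theorem Fel_add_right (b d d' : A) : Fel b (d + d') = Fel b d + Fel b d' := by
  rw [Fel, Fel, Fel, ← oe_mul, symbol_mul_right]

theorem Gel_add_right (x : Aˣ) (d d' : A) : Gel x (d + d') = Gel x d + Gel x d' := by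
  rw [Gel, Gel, Gel, ← oe_mul, symbol_mul_right]

theorem Gel_mul_left (x y : Aˣ) (d : A) : Gel (x * y) d = Gel x d + Gel y d := by
  rw [Gel, Gel, Gel, uA_mul, symbol_mul_left]

end Dual


section LocalRing

variable {A : Type} [CommRing A] [IsLocalRing A]

theorem isUnit_sub_of {a b : A} (ha : IsUnit a) (hb : ¬ IsUnit b) : IsUnit (a - b) := by
  by_contra h
  have := IsLocalRing.nonunits_add (mem_nonunits_iff.2 h) (mem_nonunits_iff.2 hb)
  rw [sub_add_cancel] at this
  exact (mem_nonunits_iff.1 this) ha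

/-- Relation (E): for units `l + m = 1` and any `d`,
`{m⁻¹, 1+dε} + {1+ldε, 1+dε} ∈ TT A`. -/
theorem rel_E (l m : Aˣ) (hlm : (l : A) + (m : A) = 1) (d : A) :
    Gel (m⁻¹) d + Fel ((l : A) * d) d ∈ TT A := by
  set x1 : Aˣ := -(l * m⁻¹) with hx1
  have him : ((m⁻¹ : Aˣ) : A) * (m : A) = 1 := m.inv_mul
  have hsum1 : ((uA (m⁻¹ : Aˣ) : (DualNumber A)ˣ) : DualNumber A) + ((uA x1 : (DualNumber A)ˣ) : DualNumber A) = 1 := by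
    rw [uA_val, uA_val, ← TrivSqZeroExt.inl_add]
    have h1 : ((m⁻¹ : Aˣ) : A) + ((x1 : Aˣ) : A) = 1 := by
      rw [hx1]
      simp only [Units.val_neg, Units.val_mul]
      linear_combination him - ((m⁻¹ : Aˣ) : A) * hlm
    rw [h1, TrivSqZeroExt.inl_one]
  have hst2 : K2M.symbol (uA (m⁻¹ : Aˣ)) (uA x1) = 0 := symbol_steinberg _ _ hsum1
  have hsum : ((uA (m⁻¹ : Aˣ) * oe ((l : A) * d) : (DualNumber A)ˣ) : DualNumber A)
      + ((uA x1 * oe d : (DualNumber A)ˣ) : DualNumber A) = 1 := by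
    rw [uA_oe_val, uA_oe_val, add_add_add_comm, ← TrivSqZeroExt.inl_add, ← add_mul,
      ← TrivSqZeroExt.inl_add]
    have h1 : ((m⁻¹ : Aˣ) : A) + ((x1 : Aˣ) : A) = 1 := by
      rw [hx1]
      simp only [Units.val_neg, Units.val_mul]
      linear_combination him - ((m⁻¹ : Aˣ) : A) * hlm
    have h2 : ((m⁻¹ : Aˣ) : A) * ((l : A) * d) + ((x1 : Aˣ) : A) * d = 0 := by
      rw [hx1]
      simp only [Units.val_neg, Units.val_mul]
      ring
    rw [h1, h2, TrivSqZeroExt.inl_one, TrivSqZeroExt.inl_zero, zero_mul, add_zero]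
  have hst : K2M.symbol (uA (m⁻¹ : Aˣ) * oe ((l : A) * d)) (uA x1 * oe d) = 0 :=
    symbol_steinberg _ _ hsum
  rw [symbol_mul_left, symbol_mul_right, symbol_mul_right, hst2, zero_add] at hst
  -- hst : Gel m⁻¹ d + (symbol (oe (l*d)) (uA x1) + Fel (l*d) d) = 0
  have h' : (Gel (m⁻¹) d + Fel ((l : A) * d) d) + K2M.symbol (oe ((l : A) * d)) (uA x1) = 0 := by
    rw [← hst]; rw [Gel, Fel]; abel
  have hmem := (TT A).neg_mem (mem_TT ((l : A) * d) x1)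
  rwa [← eq_neg_of_add_eq_zero_left h'] at hmem

theorem rel_F2 (l m : Aˣ) (hlm : (l : A) + (m : A) = 1) (d d' : A) :
    Fel ((l : A) * d) d' + Fel ((l : A) * d') d ∈ TT A := by
  have h1 := rel_E l m hlm d
  have h2 := rel_E l m hlm d'
  have h3 := rel_E l m hlm (d + d')
  have h := (TT A).sub_mem ((TT A).add_mem h1 h2) h3
  have e : ((Gel (m⁻¹) d + Fel ((l : A) * d) d) + (Gel (m⁻¹) d' + Fel ((l : A) * d') d'))
      - (Gel (m⁻¹) (d + d') + Fel ((l : A) * (d + d')) (d + d'))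
      = -(Fel ((l : A) * d) d' + Fel ((l : A) * d') d) := by
    rw [Gel_add_right, mul_add, Fel_add_left, Fel_add_right, Fel_add_right]
    abel
  rw [e] at h
  simpa using (TT A).neg_mem h

variable (h2 : IsUnit (2 : A))
include h2

/-- `P c` from good decompositions: for every `c`, `F(cd, d') + F(cd', d) ∈ TT A`. -/
theorem rel_F2' (c : A) : ∀ d d' : A, Fel (c * d) d' + Fel (c * d') d ∈ TT A := by
  set P : A → Prop := fun c => ∀ d d' : A, Fel (c * d) d' + Fel (c * d') d ∈ TT A with hP
  have P_of_good : ∀ c : A, IsUnit c → IsUnit (1 - c) → P c := by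
    intro c hc hc'
    have hlm : ((hc.unit : Aˣ) : A) + ((hc'.unit : Aˣ) : A) = 1 := by
      rw [hc.unit_spec, hc'.unit_spec]; ring
    intro d d'
    have := rel_F2 hc.unit hc'.unit hlm d d'
    rwa [hc.unit_spec] at this
  have P_add : ∀ c₁ c₂ : A, P c₁ → P c₂ → P (c₁ + c₂) := by
    intro c₁ c₂ hc1 hc2 d d'
    have h := (TT A).add_mem (hc1 d d') (hc2 d d')
    have e : (Fel (c₁ * d) d' + Fel (c₁ * d') d) + (Fel (c₂ * d) d' + Fel (c₂ * d') d)
        = Fel ((c₁ + c₂) * d) d' + Fel ((c₁ + c₂) * d') d := by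
      rw [add_mul, add_mul, Fel_add_left, Fel_add_left]; abel
    rwa [e] at h
  have hm1 : P (-1 : A) := P_of_good _ isUnit_one.neg
    (by rw [show (1 : A) - (-1) = 2 by ring]; exact h2)
  have hp2 : P (2 : A) := P_of_good _ h2
    (by rw [show (1 : A) - 2 = -1 by ring]; exact isUnit_one.neg)
  show P c
  rcases em (IsUnit (1 - c)) with h1c | h1c
  · rcases em (IsUnit c) with hc | hc
    · exact P_of_good _ hc h1c
    · have hgood : P (c - 1) := P_of_good _
        (by rw [show c - 1 = -(1 - c) by ring]; exact h1c.neg)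
        (by rw [show (1 : A) - (c - 1) = 2 - c by ring]; exact isUnit_sub_of h2 hc)
      have := P_add _ _ hm1 (P_add _ _ hp2 hgood)
      rwa [show (-1 : A) + (2 + (c - 1)) = c by ring] at this
  · have hc : IsUnit c := by
      rw [show c = 1 - (1 - c) by ring]; exact isUnit_sub_of isUnit_one h1c
    have hc1 : P (c + 1) := P_of_good _
      (by rw [show c + 1 = 2 - (1 - c) by ring]; exact isUnit_sub_of h2 h1c)
      (by rw [show (1 : A) - (c + 1) = -c by ring]; exact hc.neg)
    have := P_add _ _ hm1 hc1
    rwa [show (-1 : A) + (c + 1) = c by ring] at this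

theorem F_all (a b : A) : Fel a b ∈ TT A := by
  have h1 : Fel a b + Fel (a * b) 1 ∈ TT A := by
    have := rel_F2' h2 a 1 b
    rwa [mul_one] at this
  have h3 : Fel (a * b) 1 ∈ TT A := by
    have hinv : (2 : A) * ((h2.unit⁻¹ : Aˣ) : A) = 1 := by
      have := h2.unit.mul_inv
      rwa [h2.unit_spec] at this
    set c : A := ((h2.unit⁻¹ : Aˣ) : A) * (a * b) with hc
    have hcc : c + c = a * b := by
      have : c + c = ((2 : A) * ((h2.unit⁻¹ : Aˣ) : A)) * (a * b) := by rw [hc]; ring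
      rw [this, hinv, one_mul]
    have hP : Fel (c * 1) 1 + Fel (c * 1) 1 ∈ TT A := rel_F2' h2 c 1 1
    rw [mul_one] at hP
    have e : Fel c 1 + Fel c 1 = Fel (a * b) 1 := by rw [← Fel_add_left, hcc]
    rwa [e] at hP
  have := (TT A).sub_mem h1 h3
  simpa using this

theorem G_good (x : Aˣ) (hx : IsUnit (1 - (x : A))) (d : A) : Gel x d ∈ TT A := by
  set l : Aˣ := hx.unit * (-x⁻¹) with hl
  have hlm : (l : A) + ((x⁻¹ : Aˣ) : A) = 1 := by
    rw [hl]
    simp only [Units.val_mul, Units.val_neg, hx.unit_spec]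
    linear_combination x.mul_inv
  have h := rel_E l (x⁻¹) hlm d
  rw [inv_inv] at h
  have := (TT A).sub_mem h (F_all h2 ((l : A) * d) d)
  simpa using this

theorem G_all (x : Aˣ) (d : A) : Gel x d ∈ TT A := by
  rcases em (IsUnit (1 - (x : A))) with hx | hx
  · exact G_good h2 x hx d
  · have hg1 : Gel (-1 : Aˣ) d ∈ TT A := by
      refine G_good h2 (-1) ?_ d
      rw [Units.val_neg, Units.val_one, show (1 : A) - (-1) = 2 by ring]
      exact h2
    have hg2 : Gel (-x) d ∈ TT A := by
      refine G_good h2 (-x) ?_ d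
      rw [Units.val_neg, show (1 : A) - (-(x : A)) = 2 - (1 - (x : A)) by ring]
      exact isUnit_sub_of h2 hx
    have h := (TT A).add_mem hg1 hg2
    rw [← Gel_mul_left] at h
    rwa [show ((-1 : Aˣ) * (-x)) = x by rw [neg_one_mul, neg_neg]] at h

end LocalRing


section Decomp

variable {A : Type} [CommRing A] [IsLocalRing A]

theorem dn_decomp (z : DualNumber A) :
    z = TrivSqZeroExt.inl (TrivSqZeroExt.fst z) + TrivSqZeroExt.inl (TrivSqZeroExt.snd z) * DualNumber.eps := by
  rw [TrivSqZeroExt.inl_mul_eq_smul, ← DualNumber.inr_eq_smul_eps,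
    TrivSqZeroExt.inl_fst_add_inr_snd_eq]

/-- projection on units. -/
def pU (u : (DualNumber A)ˣ) : Aˣ := Units.map (dualNumberProj A : DualNumber A →* A) u

@[simp] theorem pU_val (u : (DualNumber A)ˣ) :
    ((pU u : Aˣ) : A) = TrivSqZeroExt.fst ((u : DualNumber A)) := rfl

theorem unit_decomp (u : (DualNumber A)ˣ) :
    u = uA (pU u) * oe (((pU u)⁻¹ : Aˣ) * TrivSqZeroExt.snd ((u : DualNumber A))) := by
  apply Units.ext
  rw [uA_oe_val, Units.mul_inv_cancel_left, pU_val]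
  exact dn_decomp _

variable (h2 : IsUnit (2 : A))
include h2

theorem symbol_decomp (u v : (DualNumber A)ˣ) :
    K2M.symbol u v - K2M.symbol (uA (pU u)) (uA (pU v)) ∈ TT A := by
  set cu : A := ((pU u)⁻¹ : Aˣ) * TrivSqZeroExt.snd ((u : DualNumber A)) with hcu
  set cv : A := ((pU v)⁻¹ : Aˣ) * TrivSqZeroExt.snd ((v : DualNumber A)) with hcv
  have e : K2M.symbol u v = K2M.symbol (uA (pU u)) (uA (pU v))
      + (Gel (pU u) cv + (K2M.symbol (oe cu) (uA (pU v)) + Fel cu cv)) := by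
    conv_lhs => rw [unit_decomp u, unit_decomp v]
    rw [symbol_mul_left, symbol_mul_right, symbol_mul_right, Gel, Fel]
    abel
  rw [e, add_sub_cancel_left]
  exact (TT A).add_mem (G_all h2 _ _) ((TT A).add_mem (mem_TT _ _) (F_all h2 _ _))

theorem main_decomp (x : K2M (DualNumber A)) :
    x - K2M.map (iA A) (K2M.map (dualNumberProj A) x) ∈ TT A := by
  refine QuotientAddGroup.induction_on x (fun y => ?_)
  refine FreeAbelianGroup.induction_on y ?_ ?_ ?_ ?_
  · show (0 : K2M (DualNumber A)) - K2M.map (iA A) (K2M.map (dualNumberProj A) 0) ∈ TT A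
    simpa using (TT A).zero_mem
  · rintro ⟨u, v⟩
    show K2M.symbol u v - K2M.map (iA A) (K2M.map (dualNumberProj A) (K2M.symbol u v)) ∈ TT A
    rw [map_symbol, map_symbol]
    exact symbol_decomp h2 u v
  · intro p h
    rw [QuotientAddGroup.mk_neg]
    show -@id (K2M (DualNumber A)) (QuotientAddGroup.mk (of p)) - K2M.map (iA A) (K2M.map (dualNumberProj A) (-@id (K2M (DualNumber A)) (QuotientAddGroup.mk (of p)))) ∈ TT A
    rw [map_neg, map_neg, neg_sub_neg, ← neg_sub]
    exact (TT A).neg_mem h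
  · intro p q hp hq
    rw [QuotientAddGroup.mk_add]
    show @id (K2M (DualNumber A)) (QuotientAddGroup.mk p) + @id (K2M (DualNumber A)) (QuotientAddGroup.mk q) - K2M.map (iA A) (K2M.map (dualNumberProj A) (@id (K2M (DualNumber A)) (QuotientAddGroup.mk p) + @id (K2M (DualNumber A)) (QuotientAddGroup.mk q))) ∈ TT A
    rw [map_add, map_add, add_sub_add_comm]
    exact (TT A).add_mem hp hq

end Decomp

end K2Aux

/-- For a local ring `A` with `1/2 ∈ A`, the formal tangent space
`TK₂ᴹ(A) = ker (K₂ᴹ(A[ε]/ε²) → K₂ᴹ(A))` is generated as an abelian group by symbols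
`{1 + cε, a}` with `c ∈ A`, `a ∈ A^*`. -/
theorem formalTangentSpace_K2_generated (A : Type) [CommRing A] [IsLocalRing A]
    (h2 : IsUnit (2 : A)) :
    (K2M.map (dualNumberProj A)).ker =
      AddSubgroup.closure
        { x : K2M (DualNumber A) |
          ∃ (c : A) (a : Aˣ) (u v : (DualNumber A)ˣ),
            (u : DualNumber A) = 1 + TrivSqZeroExt.inl c * DualNumber.eps ∧
            (v : DualNumber A) = TrivSqZeroExt.inl (a : A) ∧
            x = K2M.symbol u v } := by
  show (K2M.map (dualNumberProj A)).ker = K2Aux.TT A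
  apply le_antisymm
  · intro x hx
    have h := K2Aux.main_decomp h2 x
    rw [AddMonoidHom.mem_ker] at hx
    rwa [hx, map_zero, sub_zero] at h
  · refine (AddSubgroup.closure_le _).2 ?_
    rintro x ⟨c, a, u, v, hu, hv, rfl⟩
    rw [SetLike.mem_coe, AddMonoidHom.mem_ker, K2Aux.map_symbol]
    have hone : Units.map ((dualNumberProj A : DualNumber A →+* A) : DualNumber A →* A) u = 1 := by
      apply Units.ext
      show dualNumberProj A ((u : DualNumber A)) = 1
      rw [hu]
      simp [dualNumberProj, TrivSqZeroExt.fst_mul]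
    rw [hone]
    exact K2Aux.symbol_one_left _
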